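/- With the same setup (U unitary, |0⟩ unit vector, P orthogonal projection, |Φ⟩ = U|0⟩, |Φ_g⟩ = P|Φ⟩, |Φ_b⟩ = (I−P)|Φ⟩, g = ‖Φ_g‖²), the operator Q = −U P₀^{φ₁} U⁻¹ P_χ^{φ₂} satisfies Q|Φ_b⟩ = (1−e^{iφ₁})(1−g)|Φ_g⟩ − ((1−e^{iφ₁})g + e^{iφ₁})|Φ_b⟩. -/

import Mathlib

/-- The rank-one orthogonal projection `|v⟩⟨v|`. -/
noncomputable def ketBra {H : Type*} [NormedAddCommGroup H] [InnerProductSpace ℂ H]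
    (v : H) : H →L[ℂ] H :=
  (innerSL ℂ v).smulRight v

/-- `P₀^φ = I − (1 − e^{iφ})|0⟩⟨0|`. -/
noncomputable def condPhase0 {H : Type*} [NormedAddCommGroup H] [InnerProductSpace ℂ H]
    (v : H) (φ : ℝ) : H →L[ℂ] H :=
  1 - (1 - Complex.exp (φ * Complex.I)) • ketBra v

/-- `P_χ^φ = I − (1 − e^{iφ})P`. -/
noncomputable def condPhaseProj {H : Type*} [NormedAddCommGroup H] [InnerProductSpace ℂ H]
    (P : H →L[ℂ] H) (φ : ℝ) : H →L[ℂ] H :=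
  1 - (1 - Complex.exp (φ * Complex.I)) • P

/-!
Since `P` kills `|Φ_b⟩`, the phase `P_χ^{φ₂}` acts trivially on it, and conjugating `P₀^{φ₁}` by the
unitary `U` gives the phase about `|Φ⟩ = U|0⟩`. Hence
`Q|Φ_b⟩ = -|Φ_b⟩ + (1 - e^{iφ₁})⟨Φ|Φ_b⟩|Φ⟩`, where `⟨Φ|Φ_b⟩ = ‖Φ‖² - ‖PΦ‖² = 1 - g`;
expanding `|Φ⟩ = |Φ_g⟩ + |Φ_b⟩` gives the claim.
-/

open ContinuousLinearMap

section

variable {H : Type*} [NormedAddCommGroup H] [InnerProductSpace ℂ H]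

lemma condPhase0_apply (w : H) (φ : ℝ) (x : H) :
    condPhase0 w φ x = x - ((1 - Complex.exp (φ * Complex.I)) * inner ℂ w x) • w := by
  simp [condPhase0, ketBra, mul_smul]

lemma condPhaseProj_apply_of_apply_eq_zero {P : H →L[ℂ] H} {x : H} (hx : P x = 0) (φ : ℝ) :
    condPhaseProj P φ x = x := by
  simp [condPhaseProj, hx]

variable [CompleteSpace H]

lemma comp_ketBra_comp_adjoint (U : H →L[ℂ] H) (v : H) :
    U ∘L ketBra v ∘L adjoint U = ketBra (U v) := by
  ext x
  simp [ketBra, adjoint_inner_right]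

lemma comp_condPhase0_comp_adjoint {U : H →L[ℂ] H} (hU : U ∘L adjoint U = 1) (v : H) (φ : ℝ) :
    U ∘L condPhase0 v φ ∘L adjoint U = condPhase0 (U v) φ := by
  rw [condPhase0, condPhase0, sub_comp, comp_sub, one_def, id_comp, ← one_def, hU, smul_comp,
    comp_smul, comp_ketBra_comp_adjoint]

lemma inner_map_map_of_adjoint_comp_self {U : H →L[ℂ] H} (hU : adjoint U ∘L U = 1) (x y : H) :
    inner ℂ (U x) (U y) = inner ℂ x y := by
  rw [← adjoint_inner_right, ← comp_apply, hU, one_apply_eq_self]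

lemma inner_map_self_eq_norm_sq_of_idempotent_of_adjoint_eq {P : H →L[ℂ] H} (hP2 : P ∘L P = P)
    (hPa : adjoint P = P) (x : H) :
    inner ℂ x (P x) = ((‖P x‖ ^ 2 : ℝ) : ℂ) := by
  conv_lhs => rw [← hP2, comp_apply, ← hPa, adjoint_inner_right, hPa]
  exact_mod_cast inner_self_eq_norm_sq_to_K (𝕜 := ℂ) (P x)

end

/-- Action of the amplitude amplification operator `Q` on the bad component:
`Q|Φ_b⟩ = (1−e^{iφ₁})(1−g)|Φ_g⟩ − ((1−e^{iφ₁})g + e^{iφ₁})|Φ_b⟩`. -/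
theorem Q_action_on_bad
    {H : Type*} [NormedAddCommGroup H] [InnerProductSpace ℂ H] [FiniteDimensional ℂ H]
    (U : H →L[ℂ] H)
    (hU1 : ContinuousLinearMap.adjoint U ∘L U = 1)
    (hU2 : U ∘L ContinuousLinearMap.adjoint U = 1)
    (v : H) (hv : ‖v‖ = 1)
    (P : H →L[ℂ] H) (hP2 : P ∘L P = P) (hPa : ContinuousLinearMap.adjoint P = P)
    (φ₁ φ₂ : ℝ)
    (Q : H →L[ℂ] H)
    (hQ : Q = -(U ∘L condPhase0 v φ₁ ∘L ContinuousLinearMap.adjoint U ∘L condPhaseProj P φ₂))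
    (Φ Φg Φb : H) (hΦ : Φ = U v) (hΦg : Φg = P Φ) (hΦb : Φb = Φ - Φg)
    (g : ℂ) (hg : g = (‖Φg‖ ^ 2 : ℝ)) :
    Q Φb = ((1 - Complex.exp (φ₁ * Complex.I)) * (1 - g)) • Φg
      - ((1 - Complex.exp (φ₁ * Complex.I)) * g + Complex.exp (φ₁ * Complex.I)) • Φb := by
  have hPΦb : P Φb = 0 := by
    rw [hΦb, hΦg, map_sub, ← comp_apply, hP2, sub_self]
  have hΦΦb : inner ℂ Φ Φb = 1 - g := by
    rw [hΦb, inner_sub_right, hΦg, inner_map_self_eq_norm_sq_of_idempotent_of_adjoint_eq hP2 hPa,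
      ← hΦg, ← hg, hΦ, inner_map_map_of_adjoint_comp_self hU1, inner_self_eq_norm_sq_to_K, hv]
    norm_num
  calc Q Φb = -(U ∘L condPhase0 v φ₁ ∘L adjoint U) Φb := by
        simp only [hQ, neg_apply, comp_apply, condPhaseProj_apply_of_apply_eq_zero hPΦb]
    _ = -condPhase0 Φ φ₁ Φb := by rw [comp_condPhase0_comp_adjoint hU2, hΦ]
    _ = _ := by
      rw [condPhase0_apply, hΦΦb, show Φ = Φg + Φb by rw [hΦb]; abel]
      module
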